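/- arXiv:1902.06552 — 4 statements merged into one kernel-verified Lean document; each statement's English description precedes it below -/
import Mathlib

section
/- Let Z be a Polish space, K ⊆ Z a nonempty compact subset, (X, F) a measurable space, (z_n) a sequence of F-measurable maps X → K, and C : Z → ℝ ∪ {+∞} lower semicontinuous. Define Γ(x) := {z ∈ K : ∃ subsequence n_j with z_{n_j}(x) → z and C(z_{n_j}(x)) → liminf_n C(z_n(x))}. Then Γ admits an F-measurable selection, i.e., there is a measurable map z* : X → Z with z*(x) ∈ Γ(x) for all x. -/
open Filter Topology

private lemma nat_sInf_eq_iff {S : Set ℕ} (hS : S.Nonempty) {c : ℕ} :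
    sInf S = c ↔ c ∈ S ∧ ∀ k < c, k ∉ S := by
  constructor
  · rintro rfl
    exact ⟨Nat.sInf_mem hS, fun k hk => Nat.notMem_of_lt_sInf hk⟩
  · rintro ⟨h1, h2⟩
    refine le_antisymm (Nat.sInf_le h1) ?_
    by_contra h
    exact h2 _ (lt_of_not_ge h) (Nat.sInf_mem hS)

private lemma pigeon {S : ℕ → Set ℕ} (hanti : Antitone S) (hinf : ∀ m, (S m).Infinite)
    {ι : Type*} (F : Finset ι) (T : ι → Set ℕ)
    (hcov : ∀ n, n ∈ S 0 → ∃ k ∈ F, n ∈ T k) :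
    ∃ k ∈ F, ∀ m, (S m ∩ T k).Infinite := by
  classical
  -- for each m, some k works
  have h1 : ∀ m, ∃ k ∈ F, (S m ∩ T k).Infinite := by
    intro m
    by_contra h
    push_neg at h
    have hfin : (⋃ k ∈ F, S m ∩ T k).Finite := by
      apply Set.Finite.biUnion F.finite_toSet
      intro k hk
      have h' := h k hk
      exact h'
    have : S m ⊆ ⋃ k ∈ F, S m ∩ T k := by
      intro n hn
      obtain ⟨k, hkF, hkT⟩ := hcov n (hanti (Nat.zero_le m) hn)
      exact Set.mem_biUnion hkF ⟨hn, hkT⟩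
    exact hinf m (hfin.subset this)
  choose g hgF hginf using h1
  -- pigeonhole over m
  obtain ⟨k, hk⟩ := Finite.exists_infinite_fiber (fun m => (⟨g m, hgF m⟩ : F))
  have hset : {m | g m = (k : ι)}.Infinite := by
    have he : (fun m => (⟨g m, hgF m⟩ : F)) ⁻¹' {k} = {m | g m = (k : ι)} := by
      ext m; simp [Subtype.ext_iff]
    rw [← Set.infinite_coe_iff, ← he]
    exact hk
  refine ⟨k, k.2, fun m => ?_⟩
  obtain ⟨m', hm'mem, hm'⟩ := hset.exists_gt m
  have : S m' ∩ T (g m') ⊆ S m ∩ T (k : ι) := by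
    rw [hm'mem]
    exact Set.inter_subset_inter_left _ (hanti hm'.le)
  exact (hginf m').mono this

private lemma core {Z : Type*} [MetricSpace Z] [CompleteSpace Z]
    [SecondCountableTopology Z] [MeasurableSpace Z] [BorelSpace Z]
    {X : Type*} [MeasurableSpace X]
    (K : Set Z) (hK : IsCompact K) (hKne : K.Nonempty)
    (zn : ℕ → X → Z) (hmeas : ∀ n, Measurable (zn n)) (hK' : ∀ n x, zn n x ∈ K)
    (C : Z → EReal) (hC : LowerSemicontinuous C) :
    ∃ zstar : X → Z, Measurable zstar ∧ ∀ x, zstar x ∈ K ∧ ∃ φ : ℕ → ℕ, StrictMono φ ∧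
      Tendsto (fun j => zn (φ j) x) atTop (𝓝 (zstar x)) ∧
      Tendsto (fun j => C (zn (φ j) x)) atTop
        (𝓝 (liminf (fun n => C (zn n x)) atTop)) := by
  classical
  haveI : Nonempty Z := ⟨hKne.choose⟩
  obtain ⟨u, hu⟩ := TopologicalSpace.exists_dense_seq Z
  set L : X → EReal := fun x => liminf (fun n => C (zn n x)) atTop with hLdef
  have hCm : Measurable C := hC.measurable
  have hLm : Measurable L := Measurable.liminf (fun n => hCm.comp (hmeas n))
  set A : ℕ → X → EReal := fun m x =>
    if L x = ⊥ then ((-(m : ℝ) : ℝ) : EReal) else L x + ((1 / (m + 1) : ℝ) : EReal) with hAdef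
  have hAm : ∀ m, Measurable (A m) := by
    intro m
    apply Measurable.ite (hLm (measurableSet_singleton ⊥)) measurable_const
    have hcont : Continuous fun y : EReal => y + ((1 / (m + 1) : ℝ) : EReal) := by
      rw [continuous_iff_continuousAt]
      intro y
      have h1 : ContinuousAt (fun p : EReal × EReal => p.1 + p.2)
          (y, ((1 / (m + 1) : ℝ) : EReal)) :=
        EReal.continuousAt_add (Or.inr (EReal.coe_ne_bot _)) (Or.inr (EReal.coe_ne_top _))
      have h2 : ContinuousAt (fun y : EReal => (y, ((1 / (m + 1) : ℝ) : EReal))) y :=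
        (continuous_id.prodMk continuous_const).continuousAt
      exact ContinuousAt.comp (f := fun y : EReal => (y, ((1 / (m + 1) : ℝ) : EReal))) h1 h2
    exact hcont.measurable.comp hLm
  have hAanti : ∀ x, Antitone fun m => A m x := by
    intro x m m' hmm'
    simp only [hAdef]
    split_ifs with h
    · exact EReal.coe_le_coe_iff.mpr (neg_le_neg (by exact_mod_cast hmm'))
    · refine add_le_add_right (EReal.coe_le_coe_iff.mpr ?_) _
      apply one_div_le_one_div_of_le
      · positivity
      · exact_mod_cast Nat.succ_le_succ hmm'
  have hfreq : ∀ x m, {n | C (zn n x) ≤ A m x}.Infinite := by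
    intro x m
    by_cases hT : L x = ⊤
    · have : A m x = ⊤ := by
        simp only [hAdef, hT]
        rw [if_neg (by simp), EReal.top_add_coe]
      have : {n | C (zn n x) ≤ A m x} = Set.univ := by
        ext n; simp [this]
      rw [this]; exact Set.infinite_univ
    · have hlt : L x < A m x := by
        by_cases hB : L x = ⊥
        · simp only [hAdef, if_pos hB, hB]
          exact EReal.bot_lt_coe _
        · simp only [hAdef, if_neg hB]
          lift L x to ℝ using ⟨hT, hB⟩ with r hr
          rw [← EReal.coe_add, EReal.coe_lt_coe_iff]
          have : (0 : ℝ) < 1 / (m + 1) := by positivity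
          linarith
      have hfr : ∃ᶠ n in atTop, C (zn n x) < A m x := frequently_lt_of_liminf_lt (by isBoundedDefault) hlt
      rw [← Nat.frequently_atTop_iff_infinite]
      exact hfr.mono fun n hn => hn.le
  -- `Good x r P k`: ball of center `u k`, radius `r` refines `P` keeping all C-levels infinite
  set Good : X → ℝ → (ℕ → Prop) → ℕ → Prop := fun x r P k =>
    ∀ m, {n | P n ∧ dist (zn n x) (u k) < r ∧ C (zn n x) ≤ A m x}.Infinite with hGooddef
  have key : ∀ (x : X) (P : ℕ → Prop) (r : ℝ), 0 < r →
      (∀ m, {n | P n ∧ C (zn n x) ≤ A m x}.Infinite) → ∃ k, Good x r P k := by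
    intro x P r hr hP
    obtain ⟨F, hF⟩ := hK.elim_finite_subcover (fun k => Metric.ball (u k) r)
      (fun k => Metric.isOpen_ball) (by
        intro z hz
        obtain ⟨k, hk⟩ := hu.exists_dist_lt z hr
        exact Set.mem_iUnion.mpr ⟨k, Metric.mem_ball.mpr hk⟩)
    have hanti : Antitone fun m => {n | P n ∧ C (zn n x) ≤ A m x} := by
      intro m m' hmm' n hn
      exact ⟨hn.1, hn.2.trans (hAanti x hmm')⟩
    obtain ⟨k, hkF, hk⟩ := pigeon hanti hP F (fun k => {n | dist (zn n x) (u k) < r}) (by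
      intro n _
      have := hF (hK' n x)
      rw [Set.mem_iUnion₂] at this
      obtain ⟨k, hkF, hkb⟩ := this
      exact ⟨k, hkF, Metric.mem_ball.mp hkb⟩)
    refine ⟨k, fun m => (hk m).mono ?_⟩
    rintro n ⟨⟨h1, h2⟩, h3⟩
    exact ⟨h1, h3, h2⟩
  -- the recursive selection of ball centers
  set s : ℕ → X → ℕ := fun j => Nat.rec
    (fun x => sInf {k | Good x 1 (fun _ => True) k})
    (fun j sj x => sInf {k | Good x ((1/2 : ℝ)^(j+1))
      (fun n => dist (zn n x) (u (sj x)) < (1/2 : ℝ)^j) k}) j with hsdef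
  have hs0 : ∀ x, s 0 x = sInf {k | Good x 1 (fun _ => True) k} := fun _ => rfl
  have hsS : ∀ j x, s (j+1) x = sInf {k | Good x ((1/2 : ℝ)^(j+1))
      (fun n => dist (zn n x) (u (s j x)) < (1/2 : ℝ)^j) k} := fun _ _ => rfl
  have hne0 : ∀ x, {k | Good x 1 (fun _ => True) k}.Nonempty := by
    intro x
    exact key x _ 1 one_pos (fun m => (hfreq x m).mono fun n hn => ⟨trivial, hn⟩)
  have hInv : ∀ j x m,
      {n | dist (zn n x) (u (s j x)) < (1/2 : ℝ)^j ∧ C (zn n x) ≤ A m x}.Infinite := by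
    intro j
    induction j with
    | zero =>
      intro x m
      have hgood := Nat.sInf_mem (hne0 x)
      rw [Set.mem_setOf_eq] at hgood
      rw [← hs0 x] at hgood
      have := (hgood m).mono (fun n hn => And.intro hn.2.1 hn.2.2 :
        {n | True ∧ dist (zn n x) (u (s 0 x)) < 1 ∧ C (zn n x) ≤ A m x} ⊆
        {n | dist (zn n x) (u (s 0 x)) < 1 ∧ C (zn n x) ≤ A m x})
      rw [pow_zero]; exact this
    | succ j ih =>
      intro x m
      have hne : {k | Good x ((1/2 : ℝ)^(j+1))
          (fun n => dist (zn n x) (u (s j x)) < (1/2 : ℝ)^j) k}.Nonempty :=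
        key x _ _ (by positivity) (fun m => ih x m)
      have hgood := Nat.sInf_mem hne
      rw [Set.mem_setOf_eq] at hgood
      rw [← hsS j x] at hgood
      exact (hgood m).mono fun n hn => ⟨hn.2.1, hn.2.2⟩
  have hneS : ∀ j x, {k | Good x ((1/2 : ℝ)^(j+1))
      (fun n => dist (zn n x) (u (s j x)) < (1/2 : ℝ)^j) k}.Nonempty := by
    intro j x
    exact key x _ _ (by positivity) (fun m => hInv j x m)
  have hchain : ∀ j x, ∃ n, dist (zn n x) (u (s j x)) < (1/2 : ℝ)^j ∧
      dist (zn n x) (u (s (j+1) x)) < (1/2 : ℝ)^(j+1) := by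
    intro j x
    have hgood := Nat.sInf_mem (hneS j x)
    rw [Set.mem_setOf_eq] at hgood
    rw [← hsS j x] at hgood
    obtain ⟨n, hn⟩ := (hgood 0).nonempty
    exact ⟨n, hn.1, hn.2.1⟩
  -- measurability of the Good sets and of `s j`
  have hGoodmeas : ∀ (P : X → ℕ → Prop), (∀ n, MeasurableSet {x | P x n}) →
      ∀ (r : ℝ) (k : ℕ), MeasurableSet {x | Good x r (P x) k} := by
    intro P hP r k
    have heq : {x | Good x r (P x) k} = ⋂ m, ⋂ N, ⋃ n, ⋃ _h : N ≤ n,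
        ({x | P x n} ∩ {x | dist (zn n x) (u k) < r} ∩ {x | C (zn n x) ≤ A m x}) := by
      ext x
      simp only [hGooddef, Set.mem_setOf_eq, ← Nat.frequently_atTop_iff_infinite,
        frequently_atTop, Set.mem_iInter, Set.mem_iUnion, Set.mem_inter_iff]
      constructor
      · intro h m N
        obtain ⟨n, hn, h1, h2, h3⟩ := h m N
        exact ⟨n, hn, ⟨h1, h2⟩, h3⟩
      · intro h m N
        obtain ⟨n, hn, ⟨⟨h1, h2⟩, h3⟩⟩ := h m N
        exact ⟨n, hn, h1, h2, h3⟩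
    rw [heq]
    refine MeasurableSet.iInter fun m => MeasurableSet.iInter fun N =>
      MeasurableSet.iUnion fun n => MeasurableSet.iUnion fun _ => ?_
    refine MeasurableSet.inter (MeasurableSet.inter (hP n) ?_) ?_
    · exact measurableSet_lt ((hmeas n).dist measurable_const) measurable_const
    · exact measurableSet_le (hCm.comp (hmeas n)) (hAm m)
  have hsmeas : ∀ j, Measurable (s j) := by
    intro j
    induction j with
    | zero =>
      apply measurable_to_countable'
      intro c
      have heq : s 0 ⁻¹' {c} = ({x | Good x 1 (fun _ => True) c} ∩
          ⋂ k, ⋂ _ : k < c, {x | Good x 1 (fun _ => True) k}ᶜ) := by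
        ext x
        simp only [Set.mem_preimage, Set.mem_singleton_iff, Set.mem_inter_iff,
          Set.mem_iInter, Set.mem_compl_iff, Set.mem_setOf_eq, hs0 x]
        rw [nat_sInf_eq_iff (hne0 x)]
        simp only [Set.mem_setOf_eq]
      rw [heq]
      have htriv : ∀ n : ℕ, MeasurableSet {x : X | True} := fun n => by
        simp only [Set.setOf_true]; exact MeasurableSet.univ
      exact (hGoodmeas _ htriv 1 c).inter (MeasurableSet.iInter fun k =>
        MeasurableSet.iInter fun _ => (hGoodmeas _ htriv 1 k).compl)
    | succ j ih =>
      apply measurable_to_countable'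
      intro c
      have hPm : ∀ n : ℕ, MeasurableSet {x | dist (zn n x) (u (s j x)) < (1/2 : ℝ)^j} := by
        intro n
        have : Measurable fun x => u (s j x) := measurable_from_top.comp ih
        exact measurableSet_lt ((hmeas n).dist this) measurable_const
      have heq : s (j+1) ⁻¹' {c} = ({x | Good x ((1/2 : ℝ)^(j+1))
            (fun n => dist (zn n x) (u (s j x)) < (1/2 : ℝ)^j) c} ∩
          ⋂ k, ⋂ _ : k < c, {x | Good x ((1/2 : ℝ)^(j+1))
            (fun n => dist (zn n x) (u (s j x)) < (1/2 : ℝ)^j) k}ᶜ) := by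
        ext x
        simp only [Set.mem_preimage, Set.mem_singleton_iff, Set.mem_inter_iff,
          Set.mem_iInter, Set.mem_compl_iff, Set.mem_setOf_eq, hsS j x]
        rw [nat_sInf_eq_iff (hneS j x)]
        simp only [Set.mem_setOf_eq]
      rw [heq]
      exact (hGoodmeas _ hPm _ c).inter (MeasurableSet.iInter fun k =>
        MeasurableSet.iInter fun _ => (hGoodmeas _ hPm _ k).compl)
  -- the centers form a Cauchy sequence
  have hcauchy : ∀ x, CauchySeq (fun j => u (s j x)) := by
    intro x
    apply cauchySeq_of_le_geometric (1/2 : ℝ) 2 (by norm_num)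
    intro j
    obtain ⟨n, h1, h2⟩ := hchain j x
    calc dist (u (s j x)) (u (s (j+1) x)) ≤
        dist (u (s j x)) (zn n x) + dist (zn n x) (u (s (j+1) x)) := dist_triangle _ _ _
      _ ≤ (1/2 : ℝ)^j + (1/2 : ℝ)^(j+1) := by
          rw [dist_comm (u (s j x))]
          exact add_le_add h1.le h2.le
      _ ≤ 2 * (1/2 : ℝ)^j := by
          rw [pow_succ]
          ring_nf
          nlinarith [pow_pos (by norm_num : (0:ℝ) < 1/2) j]
  set zstar : X → Z := fun x => limUnder atTop (fun j => u (s j x)) with hzdef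
  have htend : ∀ x, Tendsto (fun j => u (s j x)) atTop (𝓝 (zstar x)) :=
    fun x => (hcauchy x).tendsto_limUnder
  have hzm : Measurable zstar := by
    apply measurable_of_tendsto_metrizable
      (f := fun j x => u (s j x))
      (fun j => measurable_from_top.comp (hsmeas j))
    rw [tendsto_pi_nhds]
    exact htend
  refine ⟨zstar, hzm, fun x => ?_⟩
  -- build the subsequence
  have hT : ∀ j, {n | dist (zn n x) (u (s j x)) < (1/2 : ℝ)^j ∧ C (zn n x) ≤ A j x}.Infinite :=
    fun j => hInv j x j
  set φ : ℕ → ℕ := fun j => Nat.rec ((hT 0).exists_gt 0).choose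
    (fun j prev => ((hT (j+1)).exists_gt prev).choose) j with hφdef
  have hφmem : ∀ j, φ j ∈ {n | dist (zn n x) (u (s j x)) < (1/2 : ℝ)^j ∧ C (zn n x) ≤ A j x} := by
    intro j
    cases j with
    | zero => exact ((hT 0).exists_gt 0).choose_spec.1
    | succ j => exact ((hT (j+1)).exists_gt (φ j)).choose_spec.1
  have hφmono : StrictMono φ := by
    apply strictMono_nat_of_lt_succ
    intro j
    exact ((hT (j+1)).exists_gt (φ j)).choose_spec.2
  -- convergence of the subsequence
  have hdist : ∀ j, dist (zn (φ j) x) (zstar x) ≤ (1/2 : ℝ)^j + dist (u (s j x)) (zstar x) := by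
    intro j
    calc dist (zn (φ j) x) (zstar x) ≤
        dist (zn (φ j) x) (u (s j x)) + dist (u (s j x)) (zstar x) := dist_triangle _ _ _
      _ ≤ (1/2 : ℝ)^j + dist (u (s j x)) (zstar x) := by
          exact add_le_add (hφmem j).1.le le_rfl
  have htendz : Tendsto (fun j => zn (φ j) x) atTop (𝓝 (zstar x)) := by
    rw [tendsto_iff_dist_tendsto_zero]
    apply squeeze_zero (fun j => dist_nonneg) hdist
    have h1 : Tendsto (fun j : ℕ => (1/2 : ℝ)^j) atTop (𝓝 0) :=
      tendsto_pow_atTop_nhds_zero_of_lt_one (by norm_num) (by norm_num)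
    have h2 : Tendsto (fun j => dist (u (s j x)) (zstar x)) atTop (𝓝 0) :=
      tendsto_iff_dist_tendsto_zero.mp (htend x)
    simpa using h1.add h2
  have hmemK : zstar x ∈ K :=
    hK.isClosed.mem_of_tendsto htendz (Eventually.of_forall fun j => hK' _ x)
  refine ⟨hmemK, φ, hφmono, htendz, ?_⟩
  -- convergence of the C-values to the liminf
  have hliminf : L x ≤ liminf (fun j => C (zn (φ j) x)) atTop := by
    have hmap : map φ atTop ≤ (atTop : Filter ℕ) := hφmono.tendsto_atTop
    have h1 : liminf (fun n => C (zn n x)) atTop ≤ liminf (fun n => C (zn n x)) (map φ atTop) :=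
      liminf_le_liminf_of_le hmap
    have h2 : liminf (fun n => C (zn n x)) (map φ atTop) =
        liminf (fun j => C (zn (φ j) x)) atTop := by
      simp only [Filter.liminf, Filter.map_map]
      rfl
    exact h1.trans_eq h2
  have hub : ∀ m, limsup (fun j => C (zn (φ j) x)) atTop ≤ A m x := by
    intro m
    apply limsup_le_of_le (by isBoundedDefault)
    filter_upwards [eventually_ge_atTop m] with j hj
    exact ((hφmem j).2).trans (hAanti x hj)
  have hlimsup : limsup (fun j => C (zn (φ j) x)) atTop ≤ L x := by
    by_cases hbot : L x = ⊥
    · have hub' : ∀ m : ℕ, limsup (fun j => C (zn (φ j) x)) atTop ≤ ((-(m : ℝ) : ℝ) : EReal) := by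
        intro m
        have h := hub m
        have hA' : A m x = ((-(m : ℝ) : ℝ) : EReal) := by
          simp only [hAdef]
          rw [if_pos hbot]
        rwa [hA'] at h
      rw [hbot]
      by_contra h
      rw [← lt_iff_not_ge, bot_lt_iff_ne_bot] at h
      have hlt : (⊥ : EReal) < limsup (fun j => C (zn (φ j) x)) atTop := h.bot_lt
      obtain ⟨c, _, hc2⟩ := EReal.lt_iff_exists_real_btwn.mp hlt
      obtain ⟨m, hm⟩ := exists_nat_gt (-c)
      have : (c : EReal) < ((-(m : ℝ) : ℝ) : EReal) := lt_of_lt_of_le hc2 (hub' m)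
      rw [EReal.coe_lt_coe_iff] at this
      linarith
    · by_cases htop : L x = ⊤
      · rw [htop]; exact le_top
      · set r : ℝ := (L x).toReal with hrdef
        have hr : (r : EReal) = L x := EReal.coe_toReal htop hbot
        have hub' : ∀ m : ℕ, limsup (fun j => C (zn (φ j) x)) atTop ≤
            ((r + 1 / (m + 1) : ℝ) : EReal) := by
          intro m
          have h := hub m
          have hA' : A m x = ((r + 1 / (m + 1) : ℝ) : EReal) := by
            have hA0 : A m x = if L x = ⊥ then ((-(m : ℝ) : ℝ) : EReal)
                else L x + ((1 / (m + 1) : ℝ) : EReal) := rfl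
            rw [hA0, if_neg hbot, ← hr, ← EReal.coe_add]
          rwa [hA'] at h
        rw [← hr]
        by_contra h
        rw [← lt_iff_not_ge] at h
        obtain ⟨c, hc1, hc2⟩ := EReal.lt_iff_exists_real_btwn.mp h
        rw [EReal.coe_lt_coe_iff] at hc1
        have hcle : ∀ m : ℕ, c ≤ r + 1 / (m + 1) := by
          intro m
          have : (c : EReal) ≤ ((r + 1 / (m + 1) : ℝ) : EReal) := le_trans hc2.le (hub' m)
          exact_mod_cast this
        have htends : Tendsto (fun m : ℕ => r + 1 / (m + 1 : ℝ)) atTop (𝓝 r) := by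
          have := tendsto_one_div_add_atTop_nhds_zero_nat (𝕜 := ℝ)
          simpa using (tendsto_const_nhds (x := r)).add this
        have : c ≤ r := ge_of_tendsto' htends hcle
        linarith
  exact tendsto_of_le_liminf_of_limsup_le hliminf hlimsup

theorem stmt_1 {Z : Type*} [TopologicalSpace Z] [PolishSpace Z]
    {X : Type*} [MeasurableSpace X] [MeasurableSpace Z] [BorelSpace Z]
    (K : Set Z) (hK : IsCompact K) (hKne : K.Nonempty)
    (zn : ℕ → X → Z) (hmeas : ∀ n, Measurable (zn n)) (hK' : ∀ n x, zn n x ∈ K)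
    (C : Z → EReal) (hC : LowerSemicontinuous C)
    (Γ : X → Set Z)
    (hΓ : ∀ x, Γ x = {z ∈ K | ∃ φ : ℕ → ℕ, StrictMono φ ∧
      Tendsto (fun j => zn (φ j) x) atTop (𝓝 z) ∧
      Tendsto (fun j => C (zn (φ j) x)) atTop
        (𝓝 (liminf (fun n => C (zn n x)) atTop))}) :
    ∃ zstar : X → Z, Measurable zstar ∧ ∀ x, zstar x ∈ Γ x := by
  letI := TopologicalSpace.upgradeIsCompletelyMetrizable Z
  obtain ⟨zstar, hzm, hz⟩ := core K hK hKne zn hmeas hK' C hC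
  refine ⟨zstar, hzm, fun x => ?_⟩
  rw [hΓ x]
  obtain ⟨hmem, φ, h1, h2, h3⟩ := hz x
  exact ⟨hmem, φ, h1, h2, h3⟩
end

section
/- Let (X, F) be a measurable space, Z a Polish space, U : X × Z → ℝ a Carathéodory function, and A, B ⊆ Z with A nonempty compact and B closed with A ∩ B nonempty. Define v_A(x) := max_{z∈A} U(x,z), v_{A∩B}(x) := max_{z∈A∩B} U(x,z), and Γ_A(x) := {z ∈ A : U(x,z) = v_A(x)}. Then {x ∈ X : Γ_A(x) ∩ B ≠ ∅} = {x ∈ X : v_A(x) = v_{A∩B}(x)}, and hence this set is F-measurable. -/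
open Filter Topology

lemma aux_meas_sSup {X : Type*} [MeasurableSpace X]
    {Z : Type*} [TopologicalSpace Z] [PolishSpace Z]
    (U : X → Z → ℝ)
    (hUc : ∀ x, Continuous (U x)) (hUm : ∀ z, Measurable (fun x => U x z))
    (K : Set Z) (hK : IsCompact K) (hKne : K.Nonempty) :
    Measurable (fun x => sSup ((U x) '' K)) := by
  haveI : Nonempty K := hKne.to_subtype
  obtain ⟨D, hDc, hDd⟩ := TopologicalSpace.exists_countable_dense (K : Set Z)
  have hDne : D.Nonempty := hDd.nonempty
  haveI : Nonempty D := hDne.to_subtype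
  haveI : Countable D := hDc.to_subtype
  have key : ∀ x, sSup ((U x) '' K) = ⨆ d : D, U x (d : Z) := by
    intro x
    have hbdd : BddAbove ((U x) '' K) := (hK.image (hUc x)).bddAbove
    have hbdd2 : BddAbove (Set.range fun d : D => U x (d : Z)) := by
      obtain ⟨c, hc⟩ := hbdd
      exact ⟨c, by rintro y ⟨d, rfl⟩; exact hc ⟨d, (d : K).2, rfl⟩⟩
    refine le_antisymm ?_ (ciSup_le fun d => le_csSup hbdd ⟨d, (d : K).2, rfl⟩)
    refine csSup_le (hKne.image _) ?_
    rintro y ⟨z, hz, rfl⟩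
    -- use density: the closed set of points with value ≤ iSup contains D
    have hcont : Continuous fun w : K => U x (w : Z) := (hUc x).comp continuous_subtype_val
    have hclosed : IsClosed {w : K | U x (w : Z) ≤ ⨆ d : D, U x (d : Z)} :=
      isClosed_le hcont continuous_const
    have hsub : D ⊆ {w : K | U x (w : Z) ≤ ⨆ d : D, U x (d : Z)} := by
      intro d hd
      exact le_ciSup hbdd2 ⟨d, hd⟩
    have : (Set.univ : Set K) ⊆ {w : K | U x (w : Z) ≤ ⨆ d : D, U x (d : Z)} := by
      rw [← hDd.closure_eq]
      exact hclosed.closure_subset_iff.2 hsub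
    exact this (Set.mem_univ ⟨z, hz⟩)
  simp only [key]
  exact Measurable.iSup fun d => hUm (d : Z)

theorem stmt_5 {X : Type*} [MeasurableSpace X]
    {Z : Type*} [TopologicalSpace Z] [PolishSpace Z] [MeasurableSpace Z] [BorelSpace Z]
    (U : X → Z → ℝ)
    (hUc : ∀ x, Continuous (U x)) (hUm : ∀ z, Measurable (fun x => U x z))
    (A B : Set Z) (hA : IsCompact A) (hAne : A.Nonempty)
    (hB : IsClosed B) (hABne : (A ∩ B).Nonempty)
    (vA vAB : X → ℝ) (ΓA : X → Set Z)
    (hvA : ∀ x, vA x = sSup ((U x) '' A))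
    (hvAB : ∀ x, vAB x = sSup ((U x) '' (A ∩ B)))
    (hΓA : ∀ x, ΓA x = {z ∈ A | U x z = vA x}) :
    {x : X | (ΓA x ∩ B).Nonempty} = {x : X | vA x = vAB x} ∧
      MeasurableSet {x : X | (ΓA x ∩ B).Nonempty} := by
  have hAB : IsCompact (A ∩ B) := hA.inter_right hB
  have heq : {x : X | (ΓA x ∩ B).Nonempty} = {x : X | vA x = vAB x} := by
    ext x
    simp only [Set.mem_setOf_eq]
    constructor
    · rintro ⟨z, hzΓ, hzB⟩
      rw [hΓA x] at hzΓ
      obtain ⟨hzA, hzU⟩ := hzΓ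
      have h1 : vAB x ≤ vA x := by
        rw [hvA, hvAB]
        exact csSup_le_csSup (hA.image (hUc x)).bddAbove (hABne.image _)
          (Set.image_mono Set.inter_subset_left)
      have h2 : vA x ≤ vAB x := by
        rw [hvAB, ← hzU]
        exact le_csSup (hAB.image (hUc x)).bddAbove ⟨z, ⟨hzA, hzB⟩, rfl⟩
      exact le_antisymm h2 h1
    · intro h
      obtain ⟨z, hz, hzmax⟩ := hAB.exists_isMaxOn hABne (hUc x).continuousOn
      have hUz : U x z = vAB x := by
        rw [hvAB]
        have hg : IsGreatest ((U x) '' (A ∩ B)) (U x z) := by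
          constructor
          · exact ⟨z, hz, rfl⟩
          · rintro y ⟨w, hw, rfl⟩
            exact hzmax hw
        exact hg.csSup_eq.symm
      exact ⟨z, by rw [hΓA x]; exact ⟨hz.1, by rw [hUz, h]⟩, hz.2⟩
  refine ⟨heq, ?_⟩
  rw [heq]
  have hmA : Measurable vA :=
    (funext hvA : vA = _) ▸ aux_meas_sSup U hUc hUm A hA hAne
  have hmAB : Measurable vAB :=
    (funext hvAB : vAB = _) ▸ aux_meas_sSup U hUc hUm (A ∩ B) hAB hABne
  exact measurableSet_eq_fun hmA hmAB
end

section
/- A priori improvement (full participation): Under the assumptions of the existence theorem (U Carathéodory, C lower semicontinuous with C(z_0) < ∞, K := closure of {z : C(z) ≤ C(z_0), ∃x with U(x,z) ≥ U(x,z_0)} compact), for every feasible contract z : X → Z there exists a feasible contract z̃ : X → Z with z̃(X) ⊆ K and ∫_X C(z̃(x)) dμ(x) ≤ ∫_X C(z(x)) dμ(x). -/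
open Filter Topology MeasureTheory

/-- Positive part of an extended real, as an element of `ℝ≥0∞`. -/
noncomputable def erealToENNReal (x : EReal) : ENNReal :=
  if x = ⊤ then ⊤ else ENNReal.ofReal x.toReal

/-- Extended-real-valued integral of an `EReal`-valued function, defined via positive
and negative parts. -/
noncomputable def ecost {X : Type*} [MeasurableSpace X] (μ : Measure X)
    (f : X → EReal) : EReal :=
  ((∫⁻ x, erealToENNReal (f x) ∂μ : ENNReal) : EReal) -
    ((∫⁻ x, erealToENNReal (-(f x)) ∂μ : ENNReal) : EReal)

section AuxLemmas
variable {X : Type*} [MeasurableSpace X]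

lemma erealToENNReal_mono {a b : EReal} (h : a ≤ b) : erealToENNReal a ≤ erealToENNReal b := by
  unfold erealToENNReal
  rcases eq_or_ne b ⊤ with hb | hb
  · subst hb; simp
  · have ha : a ≠ ⊤ := fun h' => hb (top_le_iff.mp (h' ▸ h))
    rw [if_neg ha, if_neg hb]
    rcases eq_or_ne a ⊥ with h0 | h0
    · simp [h0]
    · exact ENNReal.ofReal_le_ofReal (EReal.toReal_le_toReal h h0 hb)

lemma ecost_mono {X : Type*} [MeasurableSpace X] (μ : Measure X) {f g : X → EReal}
    (h : ∀ x, f x ≤ g x) : ecost μ f ≤ ecost μ g := by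
  refine EReal.sub_le_sub ?_ ?_
  · exact EReal.coe_ennreal_le_coe_ennreal_iff.mpr
      (lintegral_mono fun x => erealToENNReal_mono (h x))
  · exact EReal.coe_ennreal_le_coe_ennreal_iff.mpr
      (lintegral_mono fun x => erealToENNReal_mono (EReal.neg_le_neg_iff.mpr (h x)))


lemma measurable_dfind (P : ℕ → X → Prop)
    [∀ n x, Decidable (P n x)] [∀ x, Decidable (∃ n, P n x)]
    (hP : ∀ n, MeasurableSet {x | P n x}) (f₀ : X → ℕ) (hf₀ : Measurable f₀) :
    Measurable (fun x => if h : ∃ n, P n x then Nat.find h else f₀ x) := by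
  apply measurable_to_countable'
  intro i
  have heq : (fun x => if h : ∃ n, P n x then Nat.find h else f₀ x) ⁻¹' {i} =
      ({x | P i x} ∩ ⋂ k ∈ Finset.range i, {x | ¬ P k x}) ∪
      ((⋂ n, {x | ¬ P n x}) ∩ f₀ ⁻¹' {i}) := by
    ext x
    simp only [Set.mem_preimage, Set.mem_singleton_iff, Set.mem_union, Set.mem_inter_iff,
      Set.mem_iInter, Set.mem_setOf_eq, Finset.mem_range]
    by_cases h : ∃ n, P n x
    · rw [dif_pos h, Nat.find_eq_iff h]
      constructor
      · rintro ⟨h1, h2⟩; exact Or.inl ⟨h1, h2⟩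
      · rintro (⟨h1, h2⟩ | ⟨h1, _⟩)
        · exact ⟨h1, h2⟩
        · exact absurd h (by push_neg; exact h1)
    · rw [dif_neg h]
      push_neg at h
      constructor
      · intro hf; exact Or.inr ⟨h, hf⟩
      · rintro (⟨h1, _⟩ | ⟨_, h2⟩)
        · exact absurd h1 (h i)
        · exact h2
  rw [heq]
  refine MeasurableSet.union ?_ ?_
  · exact (hP i).inter (MeasurableSet.biInter (Set.to_countable _) fun k _ => (hP k).compl)
  · exact (MeasurableSet.iInter fun n => (hP n).compl).inter (hf₀ (measurableSet_singleton i))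

theorem exists_argmax_selection {Z : Type*} [MetricSpace Z]
    [CompleteSpace Z] [SecondCountableTopology Z] [MeasurableSpace Z] [BorelSpace Z]
    (U : X → Z → ℝ) (hUc : ∀ x, Continuous (U x)) (hUm : ∀ v : Z, Measurable (fun x => U x v))
    (M : Set Z) (hMcpt : IsCompact M) (hMcl : IsClosed M) (hne : M.Nonempty) :
    ∃ L : X → Z, Measurable L ∧ ∀ x, L x ∈ M ∧ ∀ v ∈ M, U x v ≤ U x (L x) := by
  classical
  -- a countable dense sequence inside M
  obtain ⟨w, hwM, hwd⟩ : ∃ w : ℕ → Z, (∀ n, w n ∈ M) ∧ M ⊆ closure (Set.range w) := by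
    obtain ⟨s, hsc, hsd⟩ := TopologicalSpace.exists_countable_dense (↥M)
    obtain ⟨p, hp⟩ := hne
    set t : Set Z := insert p (Subtype.val '' s) with ht
    have htc : t.Countable := (hsc.image _).insert p
    have htne : t.Nonempty := ⟨p, Set.mem_insert _ _⟩
    obtain ⟨w, hw⟩ := htc.exists_eq_range htne
    refine ⟨w, ?_, ?_⟩
    · intro n
      have : w n ∈ t := hw ▸ Set.mem_range_self n
      rcases this with h | ⟨y, _, heq⟩
      · exact h ▸ hp
      · exact heq ▸ y.2
    · intro y hy
      rw [← hw]
      have h1 : (⟨y, hy⟩ : ↥M) ∈ closure s := hsd _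
      have h2 : y ∈ closure (Subtype.val '' s) := by
        have := (continuous_subtype_val (p := (· ∈ M))).continuousAt (x := (⟨y, hy⟩ : ↥M))
        have himg := image_closure_subset_closure_image
          (f := (Subtype.val : ↥M → Z)) (s := s) continuous_subtype_val
        exact himg ⟨⟨y, hy⟩, h1, rfl⟩
      exact closure_mono (Set.subset_insert _ _) h2
  -- the approximate-argmax predicate
  set A : ℕ → ℝ → X → Prop :=
    fun i ρ x => ∀ n, ∀ q : ℚ, 0 < q → ∃ k, dist (w k) (w i) < ρ ∧ U x (w n) - q < U x (w k)
    with hA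
  have hAm : ∀ i ρ, MeasurableSet {x | A i ρ x} := by
    intro i ρ
    have : {x | A i ρ x} = ⋂ n, ⋂ (q : ℚ), ⋂ (_ : 0 < q),
        ⋃ k, ({x : X | dist (w k) (w i) < ρ} ∩ {x | U x (w n) - (q : ℝ) < U x (w k)}) := by
      ext x
      simp only [hA, Set.mem_setOf_eq, Set.mem_iInter, Set.mem_iUnion, Set.mem_inter_iff]
    rw [this]
    refine MeasurableSet.iInter fun n => MeasurableSet.iInter fun q =>
      MeasurableSet.iInter fun _ => MeasurableSet.iUnion fun k => MeasurableSet.inter ?_ ?_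
    · by_cases hd : dist (w k) (w i) < ρ
      · simp only [hd, Set.setOf_true]; exact MeasurableSet.univ
      · simp only [hd, Set.setOf_false]; exact MeasurableSet.empty
    · exact measurableSet_lt ((hUm (w n)).sub measurable_const) (hUm (w k))
  -- existence of approximations near a maximizer
  have step : ∀ (x : X) (y : Z), y ∈ M → (∀ n, U x (w n) ≤ U x y) → ∀ (b : Z) (ρ : ℝ),
      dist y b ≤ ρ → ∀ ρ' : ℝ, 0 < ρ' → ∃ i, dist (w i) b < ρ + ρ' ∧ A i ρ' x := by
    intro x y hyM hymax b ρ hd ρ' hρ'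
    have hyc : y ∈ closure (Set.range w) := hwd hyM
    obtain ⟨p1, hp1, hpd1⟩ := Metric.mem_closure_iff.mp hyc (ρ'/2) (by positivity)
    obtain ⟨i, rfl⟩ := hp1
    refine ⟨i, ?_, ?_⟩
    · calc dist (w i) b ≤ dist (w i) y + dist y b := dist_triangle _ _ _
        _ < ρ'/2 + ρ := by rw [dist_comm] at hpd1; linarith
        _ ≤ ρ + ρ' := by linarith
    · intro n q hq
      obtain ⟨δ, hδ, hδ'⟩ := Metric.continuousAt_iff.mp ((hUc x).continuousAt (x := y))
        (q : ℝ) (by exact_mod_cast hq)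
      obtain ⟨p2, hp2, hpd2⟩ := Metric.mem_closure_iff.mp hyc (min δ (ρ'/2))
        (lt_min hδ (by positivity))
      obtain ⟨k, rfl⟩ := hp2
      refine ⟨k, ?_, ?_⟩
      · have h1 : dist (w k) y < ρ'/2 := by
          rw [dist_comm]; exact lt_of_lt_of_le hpd2 (min_le_right _ _)
        calc dist (w k) (w i) ≤ dist (w k) y + dist y (w i) := dist_triangle _ _ _
          _ < ρ'/2 + ρ'/2 := by linarith
          _ = ρ' := by ring
      · have h1 : dist (w k) y < δ := by
          rw [dist_comm]; exact lt_of_lt_of_le hpd2 (min_le_left _ _)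
        have h2 : |U x (w k) - U x y| < q := by
          have := hδ' h1; rwa [Real.dist_eq] at this
        have h3 := (abs_lt.mp h2).1
        have h4 := hymax n
        linarith
  -- attainment of the max within a small ball, given the predicate
  have attain : ∀ (x : X) (i : ℕ) (ρ : ℝ), 0 < ρ → A i ρ x →
      ∃ y ∈ M, dist y (w i) ≤ ρ ∧ ∀ n, U x (w n) ≤ U x y := by
    intro x i ρ hρ hAx
    have hFc : IsCompact (M ∩ Metric.closedBall (w i) ρ) :=
      hMcpt.inter_right Metric.isClosed_closedBall
    have hFne : (M ∩ Metric.closedBall (w i) ρ).Nonempty := by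
      obtain ⟨k, hk1, _⟩ := hAx 0 1 one_pos
      exact ⟨w k, hwM k, Metric.mem_closedBall.mpr hk1.le⟩
    obtain ⟨y, hyF, hymax⟩ := hFc.exists_isMaxOn hFne ((hUc x).continuousOn)
    refine ⟨y, hyF.1, Metric.mem_closedBall.mp hyF.2, ?_⟩
    intro n
    by_contra hlt
    push_neg at hlt
    obtain ⟨q, hq0, hq⟩ := exists_rat_btwn (sub_pos.mpr hlt)
    obtain ⟨k, hk1, hk2⟩ := hAx n q (by exact_mod_cast hq0)
    have hkF : w k ∈ M ∩ Metric.closedBall (w i) ρ :=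
      ⟨hwM k, Metric.mem_closedBall.mpr hk1.le⟩
    have h5 : U x (w k) ≤ U x y := hymax hkF
    linarith
  -- the recursive selection of indices
  set ρ : ℕ → ℝ := fun k => (1/2 : ℝ)^k with hρdef
  have hρpos : ∀ k, 0 < ρ k := fun k => by positivity
  set J : ℕ → X → ℕ := fun k => Nat.rec (motive := fun _ => X → ℕ)
    (fun x => if h : ∃ i, A i (ρ 0) x then Nat.find h else 0)
    (fun k jk x => if h : ∃ i, dist (w i) (w (jk x)) < ρ k + ρ (k+1) ∧ A i (ρ (k+1)) x
      then Nat.find h else jk x) k with hJ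
  have hJ0 : ∀ x, J 0 x = if h : ∃ i, A i (ρ 0) x then Nat.find h else 0 := fun _ => rfl
  have hJsucc : ∀ k x, J (k+1) x =
      if h : ∃ i, dist (w i) (w (J k x)) < ρ k + ρ (k+1) ∧ A i (ρ (k+1)) x
      then Nat.find h else J k x := fun _ _ => rfl
  have hJm : ∀ k, Measurable (J k) := by
    intro k
    induction k with
    | zero =>
      exact measurable_dfind (fun i x => A i (ρ 0) x) (fun i => hAm i (ρ 0)) _ measurable_const
    | succ k ih =>
      have : Measurable (fun x =>
          if h : ∃ i, dist (w i) (w (J k x)) < ρ k + ρ (k+1) ∧ A i (ρ (k+1)) x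
          then Nat.find h else J k x) := by
        refine measurable_dfind _ (fun i => ?_) _ ih
        have : {x | dist (w i) (w (J k x)) < ρ k + ρ (k+1) ∧ A i (ρ (k+1)) x} =
            (J k ⁻¹' {m | dist (w i) (w m) < ρ k + ρ (k+1)}) ∩ {x | A i (ρ (k+1)) x} := by
          ext x; simp [Set.mem_preimage]
        rw [this]
        exact (ih MeasurableSpace.measurableSet_top).inter (hAm _ _)
      exact this
  -- invariant
  have hInv : ∀ k x, A (J k x) (ρ k) x := by
    intro k x
    induction k with
    | zero =>
      have hex : ∃ i, A i (ρ 0) x := by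
        obtain ⟨y, hyM, hymax⟩ := hMcpt.exists_isMaxOn hne ((hUc x).continuousOn)
        obtain ⟨i, _, hAi⟩ := step x y hyM (fun n => hymax (hwM n)) y 0 (by simp) (ρ 0) (hρpos 0)
        exact ⟨i, hAi⟩
      rw [hJ0, dif_pos hex]
      exact Nat.find_spec hex
    | succ k ih =>
      obtain ⟨y, hyM, hyd, hymax⟩ := attain x (J k x) (ρ k) (hρpos k) ih
      have hex : ∃ i, dist (w i) (w (J k x)) < ρ k + ρ (k+1) ∧ A i (ρ (k+1)) x :=
        step x y hyM hymax (w (J k x)) (ρ k) hyd (ρ (k+1)) (hρpos _)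
      rw [hJsucc, dif_pos hex]
      exact (Nat.find_spec hex).2
  -- Cauchy
  have hdist : ∀ k x, dist (w (J (k+1) x)) (w (J k x)) ≤ 2 * ρ k := by
    intro k x
    rw [hJsucc]
    by_cases h : ∃ i, dist (w i) (w (J k x)) < ρ k + ρ (k+1) ∧ A i (ρ (k+1)) x
    · rw [dif_pos h]
      have := (Nat.find_spec h).1
      have hle : ρ (k+1) ≤ ρ k := by
        simp only [hρdef]
        exact pow_le_pow_of_le_one (by norm_num) (by norm_num) (Nat.le_succ k)
      linarith
    · rw [dif_neg h]
      simp [dist_self]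
      positivity
  have hcau : ∀ x, CauchySeq (fun k => w (J k x)) := by
    intro x
    apply cauchySeq_of_le_geometric (1/2 : ℝ) 2 (by norm_num)
    intro n
    rw [dist_comm]
    exact hdist n x
  set L : X → Z := fun x => (cauchySeq_tendsto_of_complete (hcau x)).choose with hLdef
  have hL : ∀ x, Tendsto (fun k => w (J k x)) atTop (𝓝 (L x)) :=
    fun x => (cauchySeq_tendsto_of_complete (hcau x)).choose_spec
  have hLm : Measurable L := by
    apply measurable_of_tendsto_metrizable
      (f := fun k x => w (J k x)) (fun k => measurable_from_top.comp (hJm k))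
    rw [tendsto_pi_nhds]
    exact hL
  have hLM : ∀ x, L x ∈ M :=
    fun x => hMcl.mem_of_tendsto (hL x) (Filter.Eventually.of_forall fun k => hwM _)
  have hub : ∀ x n, U x (w n) ≤ U x (L x) := by
    intro x n
    refine le_of_forall_pos_le_add ?_
    intro ε hε
    obtain ⟨δ, hδ, hδ'⟩ := Metric.continuousAt_iff.mp ((hUc x).continuousAt (x := L x)) ε hε
    have h0 : Tendsto (fun k => ρ k + dist (w (J k x)) (L x)) atTop (𝓝 0) := by
      have h1 : Tendsto ρ atTop (𝓝 0) :=
        tendsto_pow_atTop_nhds_zero_of_lt_one (by norm_num) (by norm_num)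
      have h2 := tendsto_iff_dist_tendsto_zero.mp (hL x)
      simpa using h1.add h2
    obtain ⟨k, hk⟩ := (h0.eventually (gt_mem_nhds hδ)).exists
    obtain ⟨y, hyM, hyd, hymax⟩ := attain x (J k x) (ρ k) (hρpos k) (hInv k x)
    have hdy : dist y (L x) < δ := by
      calc dist y (L x) ≤ dist y (w (J k x)) + dist (w (J k x)) (L x) := dist_triangle _ _ _
        _ ≤ ρ k + dist (w (J k x)) (L x) := by linarith
        _ < δ := hk
    have h2 : |U x y - U x (L x)| < ε := by
      have := hδ' hdy; rwa [Real.dist_eq] at this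
    have h3 := (abs_lt.mp h2).2
    have h4 := hymax n
    linarith
  refine ⟨L, hLm, fun x => ⟨hLM x, ?_⟩⟩
  intro v hv
  have hcl : IsClosed {u : Z | U x u ≤ U x (L x)} := isClosed_le (hUc x) continuous_const
  have hsub : Set.range w ⊆ {u : Z | U x u ≤ U x (L x)} := by
    rintro u ⟨n, rfl⟩; exact hub x n
  exact closure_minimal hsub hcl (hwd hv)

end AuxLemmas

theorem stmt_18 {X : Type*} [MeasurableSpace X] (μ : Measure X) [IsProbabilityMeasure μ]
    {Z : Type*} [TopologicalSpace Z] [PolishSpace Z] [MeasurableSpace Z] [BorelSpace Z]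
    (U : X → Z → ℝ)
    (hUc : ∀ x, Continuous (U x)) (hUm : ∀ z, Measurable (fun x => U x z))
    (z₀ : Z) (C : Z → EReal) (hC : LowerSemicontinuous C) (hCz₀ : C z₀ ≠ ⊤)
    (K : Set Z) (hK : K = closure {z : Z | C z ≤ C z₀ ∧ ∃ x : X, U x z₀ ≤ U x z})
    (hKcompact : IsCompact K)
    (Feasible : (X → Z) → Prop)
    (hFeas : ∀ z : X → Z, Feasible z ↔ (Measurable z ∧
      (∀ x, U x z₀ ≤ U x (z x)) ∧ (∀ x x', U x (z x') ≤ U x (z x))))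
    (z : X → Z) (hz : Feasible z) :
    ∃ ztil : X → Z, Feasible ztil ∧ (∀ x, ztil x ∈ K) ∧
      ecost μ (fun x => C (ztil x)) ≤ ecost μ (fun x => C (z x)) := by
  classical
  obtain ⟨hzm, hIR, hIC⟩ := (hFeas z).mp hz
  have hXne : Nonempty X := by
    by_contra h
    rw [not_nonempty_iff] at h
    have h1 : μ Set.univ = 1 := measure_univ
    rw [Set.univ_eq_empty_iff.mpr h, measure_empty] at h1
    exact zero_ne_one h1
  letI := TopologicalSpace.upgradeIsCompletelyMetrizable Z
  set T : Set Z := insert z₀ (z '' {x | C (z x) ≤ C z₀}) with hT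
  have hTS : T ⊆ {v : Z | C v ≤ C z₀ ∧ ∃ x : X, U x z₀ ≤ U x v} := by
    rintro v (rfl | ⟨x, hx, rfl⟩)
    · exact ⟨le_refl _, hXne.elim fun x => ⟨x, le_refl _⟩⟩
    · exact ⟨hx, ⟨x, hIR x⟩⟩
  set M : Set Z := closure T with hM
  have hMK : M ⊆ K := hK ▸ closure_mono hTS
  have hMcl : IsClosed M := isClosed_closure
  have hMcpt : IsCompact M := hKcompact.of_isClosed_subset hMcl hMK
  have hz₀M : z₀ ∈ M := subset_closure (Set.mem_insert _ _)
  have hCM : ∀ v ∈ M, C v ≤ C z₀ := by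
    intro v hv
    have hcl : IsClosed (C ⁻¹' Set.Iic (C z₀)) := hC.isClosed_preimage (C z₀)
    have hsub : T ⊆ C ⁻¹' Set.Iic (C z₀) := by
      rintro u (rfl | ⟨x, hx, rfl⟩)
      · exact Set.mem_preimage.mpr (Set.mem_Iic.mpr le_rfl)
      · exact Set.mem_preimage.mpr (Set.mem_Iic.mpr hx)
    exact closure_minimal hsub hcl hv
  have hUleM : ∀ x, ∀ v ∈ M, U x v ≤ U x (z x) := by
    intro x v hv
    have hcl : IsClosed {u : Z | U x u ≤ U x (z x)} := isClosed_le (hUc x) continuous_const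
    have hsub : T ⊆ {u : Z | U x u ≤ U x (z x)} := by
      rintro u (rfl | ⟨x', _, rfl⟩)
      · exact hIR x
      · exact hIC x x'
    exact closure_minimal hsub hcl hv
  obtain ⟨L, hLm, hL⟩ := exists_argmax_selection U hUc hUm M hMcpt hMcl ⟨z₀, hz₀M⟩
  set G : Set X := {x | C (z x) ≤ C z₀} with hG
  have hGm : MeasurableSet G := by
    have hm : Measurable fun x => C (z x) := hC.measurable.comp hzm
    exact hm measurableSet_Iic
  set zt : X → Z := G.piecewise z L with hzt
  have hztM : ∀ x, zt x ∈ M := by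
    intro x
    by_cases hx : x ∈ G
    · rw [hzt, Set.piecewise_eq_of_mem _ _ _ hx]
      exact subset_closure (Set.mem_insert_iff.mpr (Or.inr ⟨x, hx, rfl⟩))
    · rw [hzt, Set.piecewise_eq_of_notMem _ _ _ hx]
      exact (hL x).1
  refine ⟨zt, ?_, fun x => hMK (hztM x), ?_⟩
  · rw [hFeas]
    refine ⟨Measurable.piecewise hGm hzm hLm, ?_, ?_⟩
    · intro x
      by_cases hx : x ∈ G
      · rw [hzt, Set.piecewise_eq_of_mem _ _ _ hx]; exact hIR x
      · rw [hzt, Set.piecewise_eq_of_notMem _ _ _ hx]; exact (hL x).2 z₀ hz₀M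
    · intro x x'
      by_cases hx : x ∈ G
      · rw [hzt, Set.piecewise_eq_of_mem _ _ _ hx]; exact hUleM x _ (hztM x')
      · rw [hzt, Set.piecewise_eq_of_notMem _ _ _ hx]; exact (hL x).2 _ (hztM x')
  · apply ecost_mono
    intro x
    by_cases hx : x ∈ G
    · rw [hzt, Set.piecewise_eq_of_mem _ _ _ hx]
    · rw [hzt, Set.piecewise_eq_of_notMem _ _ _ hx]
      have h1 : C z₀ < C (z x) := not_le.mp hx
      exact le_trans (hCM _ ((hL x).1)) h1.le
end

section
/- A priori improvement (partial participation): Let (X,F,μ) be a probability space, Z Polish, U : X × Z → ℝ Carathéodory, u_0 : X → ℝ measurable, C : Z → ℝ ∪ {+∞} lower semicontinuous. Assume there exists z̄ ∈ Z with C(z̄) ≤ 0 and U(x, z̄) ≥ u_0(x) for some x, and that F_0 := closure of {z ∈ Z : C(z) ≤ 0 and ∃x with U(x,z) ≥ u_0(x)} is compact. For an incentive compatible contract z let p_z := {x : U(x,z(x)) ≥ u_0(x)} be the participation set with indicator 1_{p_z}. Then for every incentive compatible contract z there exists an incentive compatible contract z̃ with z̃(X) ⊆ F_0 and 1_{p_{z̃}}(x)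 C(z̃(x)) ≤ 1_{p_z}(x) C(z(x)) for every x ∈ X. -/
open Filter Topology MeasureTheory TopologicalSpace

/-- A countable sequence dense in a nonempty subset of a second-countable metric space. -/
lemma dense_seq_aux {Z : Type*} [MetricSpace Z] [SecondCountableTopology Z]
    (S : Set Z) (hS : S.Nonempty) :
    ∃ v : ℕ → Z, (∀ n, v n ∈ S) ∧ ∀ w ∈ S, ∀ ε > 0, ∃ n, dist w (v n) < ε := by
  haveI : Nonempty ↥S := hS.to_subtype
  refine ⟨fun n => (denseSeq ↥S n : Z), fun n => (denseSeq ↥S n).2, fun w hw ε hε => ?_⟩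
  have hcl : (⟨w, hw⟩ : ↥S) ∈ closure (Set.range (denseSeq ↥S)) :=
    denseRange_denseSeq ↥S _
  rcases Metric.mem_closure_iff.1 hcl ε hε with ⟨b, ⟨n, rfl⟩, hb⟩
  exact ⟨n, by simpa [Subtype.dist_eq] using hb⟩

/-- Measurable selection of a maximizer of a Carathéodory function over a fixed
nonempty compact set, in a Polish space. -/
theorem exists_argmax_selector {X : Type*} [MeasurableSpace X]
    {Z : Type*} [TopologicalSpace Z] [PolishSpace Z] [MeasurableSpace Z] [BorelSpace Z]
    (U : X → Z → ℝ) (hUc : ∀ x, Continuous (U x)) (hUm : ∀ z, Measurable (fun x => U x z))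
    (K : Set Z) (hK : IsCompact K) (hKne : K.Nonempty) :
    ∃ s : X → Z, Measurable s ∧ ∀ x, s x ∈ K ∧ ∀ v ∈ K, U x v ≤ U x (s x) := by
  letI := upgradeIsCompletelyMetrizable Z
  -- the argmax multifunction
  set A : X → Set Z := fun x => {w | w ∈ K ∧ ∀ v ∈ K, U x v ≤ U x w} with hA
  have hAne : ∀ x, (A x).Nonempty := by
    intro x
    obtain ⟨a, haK, ha⟩ := hK.exists_isMaxOn hKne (hUc x).continuousOn
    exact ⟨a, haK, fun v hv => ha hv⟩
  have hAK : ∀ x, A x ⊆ K := fun x w hw => hw.1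
  have hAclosed : ∀ x, IsClosed (A x) := by
    intro x
    have : A x = K ∩ ⋂ v ∈ K, {w | U x v ≤ U x w} := by
      ext w; simp [hA, Set.mem_iInter]
    rw [this]
    exact hK.isClosed.inter (isClosed_biInter fun v _ =>
      isClosed_le continuous_const (hUc x))
  -- dense sequence in K
  obtain ⟨u, huK, huD⟩ := dense_seq_aux K hKne
  have hKclu : K ⊆ closure (Set.range u) := fun w hw =>
    Metric.mem_closure_iff.2 fun ε hε => by
      obtain ⟨n, hn⟩ := huD w hw ε hε; exact ⟨u n, ⟨n, rfl⟩, hn⟩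
  -- key measurability: hitting a closed set
  have meas_ne : ∀ S : Set Z, IsClosed S → MeasurableSet {x | (A x ∩ S).Nonempty} := by
    intro S hS
    by_cases hKS : (K ∩ S).Nonempty
    · obtain ⟨v, hvKS, hvD⟩ := dense_seq_aux (K ∩ S) hKS
      have hset : {x | (A x ∩ S).Nonempty} = ⋂ (k : ℕ), ⋃ (m : ℕ), ⋂ (n : ℕ),
          {x | U x (u n) < U x (v m) + 1 / ((k : ℝ) + 1)} := by
        ext x
        simp only [Set.mem_iInter, Set.mem_iUnion, Set.mem_setOf_eq]
        constructor
        · rintro ⟨a, ⟨haK, hamax⟩, haS⟩ k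
          have hε : (0:ℝ) < 1 / ((k : ℝ) + 1) := by positivity
          obtain ⟨δ, hδ, hδ'⟩ := Metric.continuous_iff.1 (hUc x) a (1 / ((k : ℝ) + 1)) hε
          obtain ⟨m, hm⟩ := hvD a ⟨haK, haS⟩ δ hδ
          refine ⟨m, fun n => ?_⟩
          have h1 : dist (U x (v m)) (U x a) < 1 / ((k : ℝ) + 1) :=
            hδ' _ (by rwa [dist_comm])
          rw [Real.dist_eq, abs_sub_lt_iff] at h1
          have h2 : U x (u n) ≤ U x a := hamax (u n) (huK n)
          linarith [h1.2]
        · intro h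
          choose m hm using h
          obtain ⟨a, haKS, φ, hφ, hφt⟩ :=
            (hK.inter_right hS).tendsto_subseq (fun k => hvKS (m k))
          have key : ∀ n, U x (u n) ≤ U x a := by
            intro n
            have t1 : Tendsto (fun k => U x (v (m (φ k))) + 1 / ((φ k : ℝ) + 1)) atTop
                (𝓝 (U x a + 0)) :=
              (((hUc x).tendsto a).comp hφt).add
                (tendsto_one_div_add_atTop_nhds_zero_nat.comp hφ.tendsto_atTop)
            rw [add_zero] at t1
            exact ge_of_tendsto t1 (Eventually.of_forall fun k => (hm (φ k) n).le)
          have hmax : ∀ w ∈ K, U x w ≤ U x a := by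
            intro w hw
            have hcl : IsClosed {w | U x w ≤ U x a} := isClosed_le (hUc x) continuous_const
            have hsub : closure (Set.range u) ⊆ {w | U x w ≤ U x a} :=
              closure_minimal (by rintro _ ⟨n, rfl⟩; exact key n) hcl
            exact hsub (hKclu hw)
          exact ⟨a, ⟨haKS.1, hmax⟩, haKS.2⟩
      rw [hset]
      exact MeasurableSet.iInter fun k => MeasurableSet.iUnion fun m =>
        MeasurableSet.iInter fun n =>
          measurableSet_lt (hUm (u n)) ((hUm (v m)).add_const _)
    · have : {x | (A x ∩ S).Nonempty} = ∅ := by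
        ext x
        simp only [Set.mem_setOf_eq, Set.mem_empty_iff_false, iff_false]
        rintro ⟨a, ⟨haK, -⟩, haS⟩
        exact hKS ⟨a, haK, haS⟩
      rw [this]; exact MeasurableSet.empty
  -- the recursive refinement
  let g : X → ℕ → ℕ × Set Z := fun x => fun n => Nat.rec
    (Prod.mk (sInf {i | (A x ∩ Metric.closedBall (u i) ((1/2:ℝ)^0)).Nonempty})
      (Metric.closedBall
        (u (sInf {i | (A x ∩ Metric.closedBall (u i) ((1/2:ℝ)^0)).Nonempty})) ((1/2:ℝ)^0)))
    (fun n p =>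
      Prod.mk (sInf {i | (A x ∩ (p.2 ∩ Metric.closedBall (u i) ((1/2:ℝ)^(n+1)))).Nonempty})
        (p.2 ∩ Metric.closedBall
          (u (sInf {i | (A x ∩ (p.2 ∩ Metric.closedBall (u i) ((1/2:ℝ)^(n+1)))).Nonempty}))
          ((1/2:ℝ)^(n+1)))) n
  have hg0 : ∀ x, g x 0 =
      (sInf {i | (A x ∩ Metric.closedBall (u i) ((1/2:ℝ)^0)).Nonempty},
       Metric.closedBall
        (u (sInf {i | (A x ∩ Metric.closedBall (u i) ((1/2:ℝ)^0)).Nonempty})) ((1/2:ℝ)^0)) :=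
    fun _ => rfl
  have hgs : ∀ x n, g x (n+1) =
      (sInf {i | (A x ∩ ((g x n).2 ∩ Metric.closedBall (u i) ((1/2:ℝ)^(n+1)))).Nonempty},
       (g x n).2 ∩ Metric.closedBall
        (u (sInf {i | (A x ∩ ((g x n).2 ∩
          Metric.closedBall (u i) ((1/2:ℝ)^(n+1)))).Nonempty})) ((1/2:ℝ)^(n+1))) :=
    fun _ _ => rfl
  -- invariants
  have hinv : ∀ x n, (A x ∩ (g x n).2).Nonempty ∧ IsClosed (g x n).2 ∧
      (g x n).2 ⊆ Metric.closedBall (u ((g x n).1)) ((1/2:ℝ)^n) := by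
    intro x n
    induction n with
    | zero =>
      obtain ⟨a, ha⟩ := hAne x
      obtain ⟨i, hi⟩ := huD a (hAK x ha) ((1/2:ℝ)^0) (by norm_num)
      have hne : {i | (A x ∩ Metric.closedBall (u i) ((1/2:ℝ)^0)).Nonempty}.Nonempty :=
        ⟨i, ⟨a, ha, Metric.mem_closedBall.2 hi.le⟩⟩
      refine ⟨?_, ?_, ?_⟩
      · exact Nat.sInf_mem hne
      · rw [hg0]; exact Metric.isClosed_closedBall
      · rw [hg0]
    | succ n ih =>
      obtain ⟨a, haA, haS⟩ := ih.1
      obtain ⟨i, hi⟩ := huD a (hAK x haA) ((1/2:ℝ)^(n+1)) (by positivity)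
      have hne : {i | (A x ∩ ((g x n).2 ∩
          Metric.closedBall (u i) ((1/2:ℝ)^(n+1)))).Nonempty}.Nonempty :=
        ⟨i, ⟨a, haA, haS, Metric.mem_closedBall.2 hi.le⟩⟩
      refine ⟨?_, ?_, ?_⟩
      · exact Nat.sInf_mem hne
      · rw [hgs]; exact ih.2.1.inter Metric.isClosed_closedBall
      · rw [hgs]; exact Set.inter_subset_right
  have hmono : ∀ x n, (g x (n+1)).2 ⊆ (g x n).2 := by
    intro x n; rw [hgs]; exact Set.inter_subset_left
  -- the index sets are nonempty
  have hidx0 : ∀ x, {i | (A x ∩ Metric.closedBall (u i) ((1/2:ℝ)^0)).Nonempty}.Nonempty := by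
    intro x
    obtain ⟨a, ha⟩ := hAne x
    obtain ⟨i, hi⟩ := huD a (hAK x ha) ((1/2:ℝ)^0) (by norm_num)
    exact ⟨i, ⟨a, ha, Metric.mem_closedBall.2 hi.le⟩⟩
  have hidxs : ∀ x n, {i | (A x ∩ ((g x n).2 ∩
      Metric.closedBall (u i) ((1/2:ℝ)^(n+1)))).Nonempty}.Nonempty := by
    intro x n
    obtain ⟨a, haA, haS⟩ := (hinv x n).1
    obtain ⟨i, hi⟩ := huD a (hAK x haA) ((1/2:ℝ)^(n+1)) (by positivity)
    exact ⟨i, ⟨a, haA, haS, Metric.mem_closedBall.2 hi.le⟩⟩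
  -- characterization of sInf on ℕ
  have sinf_eq : ∀ (S : Set ℕ), S.Nonempty → ∀ i,
      (sInf S = i ↔ i ∈ S ∧ ∀ j, j < i → j ∉ S) := by
    intro S hS i
    constructor
    · rintro rfl; exact ⟨Nat.sInf_mem hS, fun j hj => Nat.notMem_of_lt_sInf hj⟩
    · rintro ⟨hi, hlt⟩
      refine le_antisymm (Nat.sInf_le hi) (le_of_not_gt fun h => ?_)
      exact hlt _ h (Nat.sInf_mem hS)
  -- measurability of the recursion
  have hmeas : ∀ n : ℕ, (Measurable fun x => (g x n).1) ∧
      ∃ (D : ℕ → Set Z) (c : X → ℕ), Measurable c ∧ (∀ j, IsClosed (D j)) ∧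
        ∀ x, (g x n).2 = D (c x) := by
    intro n
    induction n with
    | zero =>
      have h1 : Measurable fun x => (g x 0).1 := by
        apply measurable_to_countable'
        intro i
        have : (fun x => (g x 0).1) ⁻¹' {i} =
            {x | (A x ∩ Metric.closedBall (u i) ((1/2:ℝ)^0)).Nonempty} ∩
            ⋂ (j : ℕ), ⋂ (_ : j < i),
              {x | (A x ∩ Metric.closedBall (u j) ((1/2:ℝ)^0)).Nonempty}ᶜ := by
          ext x
          simp only [Set.mem_preimage, Set.mem_singleton_iff, Set.mem_inter_iff,
            Set.mem_iInter, Set.mem_compl_iff, Set.mem_setOf_eq]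
          rw [hg0, sinf_eq _ (hidx0 x)]
          exact ⟨fun ⟨h1, h2⟩ => ⟨h1, fun j hj => h2 j hj⟩,
            fun ⟨h1, h2⟩ => ⟨h1, fun j hj => h2 j hj⟩⟩
        rw [this]
        exact (meas_ne _ Metric.isClosed_closedBall).inter
          (MeasurableSet.iInter fun j => MeasurableSet.iInter fun _ =>
            (meas_ne _ Metric.isClosed_closedBall).compl)
      exact ⟨h1, fun j => Metric.closedBall (u j) ((1/2:ℝ)^0), fun x => (g x 0).1,
        h1, fun j => Metric.isClosed_closedBall, fun x => rfl⟩
    | succ n ih =>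
      obtain ⟨h1, D, c, hc, hDc, hgD⟩ := ih
      have h1' : Measurable fun x => (g x (n+1)).1 := by
        apply measurable_to_countable'
        intro i
        have : (fun x => (g x (n+1)).1) ⁻¹' {i} = ⋃ (j : ℕ), (c ⁻¹' {j}) ∩
            ({x | (A x ∩ (D j ∩ Metric.closedBall (u i) ((1/2:ℝ)^(n+1)))).Nonempty} ∩
            ⋂ (j' : ℕ), ⋂ (_ : j' < i),
              {x | (A x ∩ (D j ∩ Metric.closedBall (u j') ((1/2:ℝ)^(n+1)))).Nonempty}ᶜ) := by
          ext x
          simp only [Set.mem_preimage, Set.mem_singleton_iff, Set.mem_iUnion,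
            Set.mem_inter_iff, Set.mem_iInter, Set.mem_compl_iff, Set.mem_setOf_eq]
          constructor
          · intro hx
            refine ⟨c x, rfl, ?_⟩
            have := (sinf_eq _ (hidxs x n) i).1 (by exact hx)
            rw [hgD x] at this
            exact ⟨this.1, fun j' hj' => this.2 j' hj'⟩
          · rintro ⟨j, rfl, hx1, hx2⟩
            exact (sinf_eq _ (hidxs x n) i).2
              (by rw [hgD x]; exact ⟨hx1, fun j' hj' => hx2 j' hj'⟩)
        rw [this]
        refine MeasurableSet.iUnion fun j => (hc (measurableSet_singleton j)).inter ?_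
        exact (meas_ne _ ((hDc j).inter Metric.isClosed_closedBall)).inter
          (MeasurableSet.iInter fun j' => MeasurableSet.iInter fun _ =>
            (meas_ne _ ((hDc j).inter Metric.isClosed_closedBall)).compl)
      refine ⟨h1', fun k => D (Nat.unpair k).1 ∩
          Metric.closedBall (u (Nat.unpair k).2) ((1/2:ℝ)^(n+1)),
        fun x => Nat.pair (c x) ((g x (n+1)).1), ?_, ?_, ?_⟩
      · apply measurable_to_countable'
        intro k
        have : (fun x => Nat.pair (c x) ((g x (n+1)).1)) ⁻¹' {k} =
            (c ⁻¹' {(Nat.unpair k).1}) ∩ ((fun x => (g x (n+1)).1) ⁻¹' {(Nat.unpair k).2}) := by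
          ext x
          simp only [Set.mem_preimage, Set.mem_singleton_iff, Set.mem_inter_iff]
          constructor
          · rintro rfl; simp [Nat.unpair_pair]
          · rintro ⟨h1, h2⟩; rw [← Nat.pair_unpair k, h1, h2]
        rw [this]
        exact (hc (measurableSet_singleton _)).inter (h1' (measurableSet_singleton _))
      · exact fun k => (hDc _).inter Metric.isClosed_closedBall
      · intro x
        show (g x (n+1)).2 = D (Nat.unpair (Nat.pair (c x) ((g x (n+1)).1))).1 ∩
          Metric.closedBall (u (Nat.unpair (Nat.pair (c x) ((g x (n+1)).1))).2) ((1/2:ℝ)^(n+1))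
        have hsplit : (g x (n+1)).2 =
            (g x n).2 ∩ Metric.closedBall (u ((g x (n+1)).1)) ((1/2:ℝ)^(n+1)) := rfl
        rw [Nat.unpair_pair, hsplit, hgD x]
  -- the approximating sequence and its limit
  set w : ℕ → X → Z := fun n x => u ((g x n).1) with hw
  have hwmeas : ∀ n, Measurable (w n) := fun n =>
    (measurable_from_top (f := u)).comp (hmeas n).1
  have hdist : ∀ x n, dist (w n x) (w (n+1) x) ≤ 2 * (1/2:ℝ)^n := by
    intro x n
    obtain ⟨a, haA, haS⟩ := (hinv x (n+1)).1
    have h1 : a ∈ Metric.closedBall (w (n+1) x) ((1/2:ℝ)^(n+1)) := (hinv x (n+1)).2.2 haS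
    have h2 : a ∈ Metric.closedBall (w n x) ((1/2:ℝ)^n) :=
      (hinv x n).2.2 (hmono x n haS)
    rw [Metric.mem_closedBall] at h1 h2
    have := dist_triangle (w n x) a (w (n+1) x)
    rw [dist_comm a (w (n+1) x)] at this h1
    rw [dist_comm a (w n x)] at h2
    have hp : (1/2:ℝ)^(n+1) ≤ (1/2:ℝ)^n := by
      rw [pow_succ]
      nlinarith [pow_nonneg (by norm_num : (0:ℝ) ≤ 1/2) n]
    linarith
  have hcauchy : ∀ x, CauchySeq (fun n => w n x) := fun x =>
    cauchySeq_of_le_geometric (1/2) 2 (by norm_num) (hdist x)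
  choose s hs using fun x => cauchySeq_tendsto_of_complete (hcauchy x)
  have hsmeas : Measurable s :=
    measurable_of_tendsto_metrizable (fun n => hwmeas n) (tendsto_pi_nhds.2 hs)
  refine ⟨s, hsmeas, fun x => ?_⟩
  -- s x belongs to the argmax set
  have hsA : s x ∈ A x := by
    choose a haA haS using fun n => (hinv x n).1
    have hwa : ∀ n, dist (a n) (w n x) ≤ (1/2:ℝ)^n := by
      intro n
      have := (hinv x n).2.2 (haS n)
      rwa [Metric.mem_closedBall] at this
    have htend : Tendsto (fun n => a n) atTop (𝓝 (s x)) := by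
      rw [tendsto_iff_dist_tendsto_zero]
      apply squeeze_zero (fun n => dist_nonneg)
        (g := fun n => (1/2:ℝ)^n + dist (w n x) (s x))
      · intro n
        calc dist (a n) (s x) ≤ dist (a n) (w n x) + dist (w n x) (s x) :=
              dist_triangle _ _ _
          _ ≤ (1/2:ℝ)^n + dist (w n x) (s x) := by linarith [hwa n]
      · have h1 : Tendsto (fun n : ℕ => (1/2:ℝ)^n) atTop (𝓝 0) :=
          tendsto_pow_atTop_nhds_zero_of_lt_one (by norm_num) (by norm_num)
        have h2 : Tendsto (fun n => dist (w n x) (s x)) atTop (𝓝 0) :=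
          tendsto_iff_dist_tendsto_zero.1 (hs x)
        simpa using h1.add h2
    exact (hAclosed x).mem_of_tendsto htend (Eventually.of_forall haA)
  exact ⟨hsA.1, hsA.2⟩
theorem stmt_19 {X : Type*} [MeasurableSpace X] (μ : Measure X) [IsProbabilityMeasure μ]
    {Z : Type*} [TopologicalSpace Z] [PolishSpace Z] [MeasurableSpace Z] [BorelSpace Z]
    (U : X → Z → ℝ)
    (hUc : ∀ x, Continuous (U x)) (hUm : ∀ z, Measurable (fun x => U x z))
    (u₀ : X → ℝ) (hu₀ : Measurable u₀)
    (C : Z → EReal) (hC : LowerSemicontinuous C)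
    (hzbar : ∃ zbar : Z, C zbar ≤ 0 ∧ ∃ x : X, u₀ x ≤ U x zbar)
    (F₀ : Set Z) (hF₀ : F₀ = closure {z : Z | C z ≤ 0 ∧ ∃ x : X, u₀ x ≤ U x z})
    (hF₀compact : IsCompact F₀)
    (z : X → Z) (hzm : Measurable z)
    (hic : ∀ x x', U x (z x') ≤ U x (z x)) :
    ∃ ztil : X → Z, Measurable ztil ∧
      (∀ x x', U x (ztil x') ≤ U x (ztil x)) ∧
      (∀ x, ztil x ∈ F₀) ∧
      ∀ x, Set.indicator {x' : X | u₀ x' ≤ U x' (ztil x')} (fun x' => C (ztil x')) x ≤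
        Set.indicator {x' : X | u₀ x' ≤ U x' (z x')} (fun x' => C (z x')) x := by
  -- C is nonpositive on F₀
  have hCF₀ : ∀ w ∈ F₀, C w ≤ 0 := by
    intro w hw
    have h1 : IsClosed {z : Z | C z ≤ 0} := by
      have := hC.isClosed_preimage 0
      simpa [Set.preimage, Set.Iic] using this
    have h2 : F₀ ⊆ {z : Z | C z ≤ 0} := by
      rw [hF₀]
      exact closure_minimal (fun w hw => hw.1) h1
    exact h2 hw
  -- joint measurability: x ↦ U x (z x) is measurable
  have hφ : Measurable fun x => U x (z x) := by
    have huncurry : Measurable (Function.uncurry fun (w : Z) (x : X) => U x w) :=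
      measurable_uncurry_of_continuous_of_measurable
        (fun x => hUc x) (fun w => hUm w)
    exact huncurry.comp (hzm.prodMk measurable_id)
  -- the "good" set
  set B : Set X := {x | u₀ x ≤ U x (z x) ∧ C (z x) ≤ 0} with hB
  have hBmeas : MeasurableSet B := by
    refine (measurableSet_le hu₀ hφ).inter ?_
    have hCm : Measurable C := hC.measurable
    exact (hCm.comp hzm) measurableSet_Iic
  rcases Set.eq_empty_or_nonempty B with hBe | hBne
  · -- no one can participate at nonpositive cost: use the constant contract zbar
    obtain ⟨zbar, hzbar1, hzbar2⟩ := hzbar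
    refine ⟨fun _ => zbar, measurable_const, fun x x' => le_refl _, fun x => ?_, fun x => ?_⟩
    · rw [hF₀]; exact subset_closure ⟨hzbar1, hzbar2⟩
    · -- indicator inequality
      have hL : Set.indicator {x' : X | u₀ x' ≤ U x' zbar} (fun _ => C zbar) x ≤ 0 := by
        by_cases hx : x ∈ {x' : X | u₀ x' ≤ U x' zbar}
        · rw [Set.indicator_of_mem hx]; exact hzbar1
        · rw [Set.indicator_of_notMem hx]
      have hR : (0 : EReal) ≤
          Set.indicator {x' : X | u₀ x' ≤ U x' (z x')} (fun x' => C (z x')) x := by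
        by_cases hx : x ∈ {x' : X | u₀ x' ≤ U x' (z x')}
        · rw [Set.indicator_of_mem hx]
          by_contra hcon
          push_neg at hcon
          exact (Set.eq_empty_iff_forall_notMem.1 hBe x) ⟨hx, hcon.le⟩
        · rw [Set.indicator_of_notMem hx]
      exact hL.trans hR
  · -- the main case
    set K : Set Z := closure (z '' B) with hK
    have hKsub : K ⊆ F₀ := by
      rw [hK, hF₀]
      apply closure_mono
      rintro _ ⟨x, hx, rfl⟩
      exact ⟨hx.2, x, hx.1⟩
    have hKc : IsCompact K :=
      hF₀compact.of_isClosed_subset isClosed_closure hKsub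
    have hKne : K.Nonempty := by
      obtain ⟨x, hx⟩ := hBne
      exact ⟨z x, subset_closure ⟨x, hx, rfl⟩⟩
    obtain ⟨s, hsm, hs⟩ := exists_argmax_selector U hUc hUm K hKc hKne
    set ztil : X → Z := B.piecewise z s with hztil
    have hztilm : Measurable ztil := hzm.piecewise hBmeas hsm
    -- range in K
    have hrange : ∀ x, ztil x ∈ K := by
      intro x
      by_cases hx : x ∈ B
      · rw [hztil, Set.piecewise_eq_of_mem _ _ _ hx]
        exact subset_closure ⟨x, hx, rfl⟩
      · rw [hztil, Set.piecewise_eq_of_notMem _ _ _ hx]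
        exact (hs x).1
    -- maximality over K
    have hmax : ∀ x, ∀ w ∈ K, U x w ≤ U x (ztil x) := by
      intro x w hw
      by_cases hx : x ∈ B
      · rw [hztil, Set.piecewise_eq_of_mem _ _ _ hx]
        have hcl : IsClosed {w | U x w ≤ U x (z x)} :=
          isClosed_le (hUc x) continuous_const
        have : K ⊆ {w | U x w ≤ U x (z x)} := by
          rw [hK]
          refine closure_minimal ?_ hcl
          rintro _ ⟨x', _, rfl⟩
          exact hic x x'
        exact this hw
      · rw [hztil, Set.piecewise_eq_of_notMem _ _ _ hx]
        exact (hs x).2 w hw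
    refine ⟨ztil, hztilm, fun x x' => hmax x _ (hrange x'), fun x => hKsub (hrange x),
      fun x => ?_⟩
    by_cases hx : x ∈ B
    · have hzx : ztil x = z x := Set.piecewise_eq_of_mem _ _ _ hx
      have hmem1 : x ∈ {x' : X | u₀ x' ≤ U x' (ztil x')} := by
        rw [Set.mem_setOf_eq, hzx]; exact hx.1
      have hmem2 : x ∈ {x' : X | u₀ x' ≤ U x' (z x')} := hx.1
      rw [Set.indicator_of_mem hmem1, Set.indicator_of_mem hmem2, hzx]
    · have hL : Set.indicator {x' : X | u₀ x' ≤ U x' (ztil x')}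
          (fun x' => C (ztil x')) x ≤ 0 := by
        by_cases hx' : x ∈ {x' : X | u₀ x' ≤ U x' (ztil x')}
        · rw [Set.indicator_of_mem hx']
          exact hCF₀ _ (hKsub (hrange x))
        · rw [Set.indicator_of_notMem hx']
      have hR : (0 : EReal) ≤
          Set.indicator {x' : X | u₀ x' ≤ U x' (z x')} (fun x' => C (z x')) x := by
        by_cases hx' : x ∈ {x' : X | u₀ x' ≤ U x' (z x')}
        · rw [Set.indicator_of_mem hx']
          by_contra hcon
          push_neg at hcon
          exact hx ⟨hx', hcon.le⟩
        · rw [Set.indicator_of_notMem hx']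
      exact hL.trans hR
end
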